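/- For all m ≥ 2, the domination number of the 2×m grid graph equals ⌈(m+1)/2⌉. -/

import Mathlib

/-- The `n × m` grid graph: vertices `[n] × [m]`, with `(i,j)` adjacent to `(k,l)`
iff `|i-k| + |j-l| = 1`. -/
def gridGraph (n m : ℕ) : SimpleGraph (Fin n × Fin m) where
  Adj u v := Nat.dist u.1.val v.1.val + Nat.dist u.2.val v.2.val = 1
  symm := by constructor; intro u v h; simpa [Nat.dist_comm] using h
  loopless := by constructor; intro u h; simp [Nat.dist_self] at h

instance (n m : ℕ) : DecidableRel (gridGraph n m).Adj :=
  fun _ _ => instDecidableEqNat _ _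

/-- Closed neighborhood `N[S]` of a set of vertices. -/
def closedNbhd (n m : ℕ) (S : Finset (Fin n × Fin m)) : Finset (Fin n × Fin m) :=
  S.biUnion fun v => insert v ((gridGraph n m).neighborFinset v)

/-- The loss `ℓ(S) = 5|S| - |N[S]|`. -/
def loss (n m : ℕ) (S : Finset (Fin n × Fin m)) : ℤ :=
  5 * S.card - (closedNbhd n m S).card

/-- `D` is a dominating set: every vertex lies in `N[D]`. -/
def IsDominating (n m : ℕ) (D : Finset (Fin n × Fin m)) : Prop :=
  closedNbhd n m D = Finset.univ

/-- The domination number `γ(G_{n,m})`. -/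
noncomputable def domNumber (n m : ℕ) : ℕ :=
  sInf {k | ∃ D : Finset (Fin n × Fin m), IsDominating n m D ∧ D.card = k}

/-- The minimum loss `ℓ_{n,m}` over dominating sets of `G_{n,m}`. -/
noncomputable def minLoss (n m : ℕ) : ℤ :=
  sInf {l | ∃ D : Finset (Fin n × Fin m), IsDominating n m D ∧ loss n m D = l}

/-!
Let `d j` be the number of dominators in column `j`. A column with no dominator has its two
vertices dominated from the neighbouring columns, by two distinct vertices, so
`d (j - 1) + d (j + 1) ≥ 2`. Any such sequence on `m ≥ 1` columns has sum at least `m / 2 + 1`: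
folding the last two columns into the third-to-last one lowers the sum by exactly one and keeps
the condition, which reduces `m` to `m - 2`. Conversely, dominators in the even columns on
alternating rows, plus one vertex in the last column, dominate `G_{2,m}` and number `m / 2 + 1`.
-/

open Finset

lemma half_add_one_le_sum_of_cover {m : ℕ} (hm : 1 ≤ m) {d : ℕ → ℕ}
    (hzero : ∀ j, m ≤ j → d j = 0)
    -- at `j = 0`, `d (0 - 1) = d 0 = 0`, so the condition reads `2 ≤ d 1` as intended
    (hcover : ∀ j < m, d j = 0 → 2 ≤ d (j - 1) + d (j + 1)) :
    m / 2 + 1 ≤ ∑ j ∈ range m, d j := by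
  induction m using Nat.strong_induction_on generalizing d with
  | _ m ih =>
  obtain _ | _ | _ | k := m
  · omega
  · have h0 : d 0 = 0 → 2 ≤ d 0 + d 1 := hcover 0 (by omega)
    have := hzero 1 le_rfl
    simp only [zero_add, range_one, sum_singleton]
    omega
  · have h0 : d 0 = 0 → 2 ≤ d 0 + d 1 := hcover 0 (by omega)
    have h1 : d 1 = 0 → 2 ≤ d 0 + d 2 := hcover 1 (by omega)
    have := hzero 2 le_rfl
    simp only [sum_range_succ, range_zero, sum_empty]
    omega
  · show (k + 3) / 2 + 1 ≤ ∑ j ∈ range (k + 3), d j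
    have h1 : d (k + 1) = 0 → 2 ≤ d k + d (k + 2) := hcover (k + 1) (by omega)
    have h2 : d (k + 2) = 0 → 2 ≤ d (k + 1) + d (k + 3) := hcover (k + 2) (by omega)
    have h3 := hzero (k + 3) le_rfl
    set d' : ℕ → ℕ := fun j =>
      if j < k then d j else if j = k then d k + d (k + 1) + d (k + 2) - 1 else 0 with hd'
    have hsum : ∑ j ∈ range (k + 1), d' j + 1 = ∑ j ∈ range (k + 3), d j := by
      have hlow : ∑ j ∈ range k, d' j = ∑ j ∈ range k, d j :=
        sum_congr rfl fun j hj => if_pos (mem_range.mp hj)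
      have hk : d' k = d k + d (k + 1) + d (k + 2) - 1 := by simp [hd']
      rw [sum_range_succ, hlow, hk, sum_range_succ, sum_range_succ, sum_range_succ]
      omega
    have hcover' : ∀ j < k + 1, d' j = 0 → 2 ≤ d' (j - 1) + d' (j + 1) := by
      intro j hj hj0
      by_cases hjk : j < k
      · have hlo : d' (j - 1) = d (j - 1) := if_pos (by omega)
        have hmid : d' j = d j := if_pos hjk
        have hhi : d (j + 1) ≤ d' (j + 1) := by
          rcases (by omega : j + 1 < k ∨ j + 1 = k) with h | rfl
          · exact (if_pos h).ge
          · simp only [hd', lt_irrefl, if_false, if_true]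
            omega
        have := hcover j (by omega)
        omega
      · simp only [hd'] at hj0
        split_ifs at hj0 <;> omega
    have := ih (k + 1) (by omega) (by omega) (fun j hj => by simp only [hd']; split_ifs <;> omega)
      hcover'
    omega

lemma mem_closedNbhd_iff {n m : ℕ} {D : Finset (Fin n × Fin m)} {x : Fin n × Fin m} :
    x ∈ closedNbhd n m D ↔ ∃ u ∈ D, Nat.dist u.1 x.1 + Nat.dist u.2 x.2 ≤ 1 := by
  simp only [closedNbhd, mem_biUnion, mem_insert, SimpleGraph.mem_neighborFinset]
  refine exists_congr fun u => and_congr_right fun _ => ?_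
  show x = u ∨ Nat.dist u.1 x.1 + Nat.dist u.2 x.2 = 1 ↔ _
  obtain ⟨⟨a, _⟩, ⟨b, _⟩⟩ := x
  obtain ⟨⟨c, _⟩, ⟨e, _⟩⟩ := u
  simp only [Prod.ext_iff, Fin.ext_iff, Nat.dist]
  omega

section Columns

variable {n m : ℕ} (D : Finset (Fin n × Fin m))

def columnCount (j : ℕ) : ℕ := #{u ∈ D | u.2.val = j}

lemma sum_columnCount : ∑ j ∈ range m, columnCount D j = #D :=
  (card_eq_sum_card_fiberwise fun u _ => mem_range.mpr u.2.2).symm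

lemma columnCount_eq_zero {j : ℕ} (hj : m ≤ j) : columnCount D j = 0 :=
  card_eq_zero.mpr <| filter_eq_empty_iff.mpr fun u _ => by omega

end Columns

lemma IsDominating.two_le_columnCount_pred_add_succ {m : ℕ} {D : Finset (Fin 2 × Fin m)}
    (hD : IsDominating 2 m D) {j : ℕ} (hj : j < m) (h0 : columnCount D j = 0) :
    2 ≤ columnCount D (j - 1) + columnCount D (j + 1) := by
  have hside : ∀ i : Fin 2, ∃ u ∈ D, u.1 = i ∧ (u.2.val = j - 1 ∨ u.2.val = j + 1) := by
    intro i
    have hx : ((i, ⟨j, hj⟩) : Fin 2 × Fin m) ∈ closedNbhd 2 m D := hD ▸ mem_univ _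
    obtain ⟨u, huD, hu⟩ := mem_closedNbhd_iff.mp hx
    have hcol : u.2.val ≠ j := filter_eq_empty_iff.mp (card_eq_zero.mp h0) huD
    simp only [Nat.dist] at hu
    exact ⟨u, huD, Fin.ext (by omega), by omega⟩
  obtain ⟨u, hu, hu0, hucol⟩ := hside 0
  obtain ⟨v, hv, hv1, hvcol⟩ := hside 1
  calc 2 ≤ #{w ∈ D | w.2.val = j - 1 ∨ w.2.val = j + 1} :=
        one_lt_card.mpr ⟨u, mem_filter.mpr ⟨hu, hucol⟩, v, mem_filter.mpr ⟨hv, hvcol⟩,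
          fun h => by simp [h, hv1] at hu0⟩
    _ ≤ columnCount D (j - 1) + columnCount D (j + 1) := by
        rw [filter_or]
        exact card_union_le _ _

lemma IsDominating.half_add_one_le_card {m : ℕ} (hm : 1 ≤ m) {D : Finset (Fin 2 × Fin m)}
    (hD : IsDominating 2 m D) : m / 2 + 1 ≤ #D :=
  sum_columnCount D ▸ half_add_one_le_sum_of_cover hm (fun _ => columnCount_eq_zero D)
    fun _ hj => hD.two_le_columnCount_pred_add_succ hj

def zigzag (m : ℕ) (hm : 1 ≤ m) (k : ℕ) : Fin 2 × Fin m :=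
  (⟨k % 2, Nat.mod_lt _ two_pos⟩, ⟨min (2 * k) (m - 1), by omega⟩)

lemma zigzag_injOn {m : ℕ} (hm : 1 ≤ m) : Set.InjOn (zigzag m hm) (range (m / 2 + 1)) := by
  intro k hk l hl h
  simp only [coe_range, Set.mem_Iio] at hk hl
  simp only [zigzag, Prod.ext_iff, Fin.ext_iff] at h
  omega

lemma isDominating_image_zigzag {m : ℕ} (hm : 1 ≤ m) :
    IsDominating 2 m ((range (m / 2 + 1)).image (zigzag m hm)) := by
  rw [IsDominating, eq_univ_iff_forall]
  rintro ⟨i, j⟩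
  -- Column `j` is covered by zigzag vertex `j / 2`, except the row it misses in an odd
  -- column, which is covered by vertex `(j + 1) / 2`.
  let k := if i.val = j.val / 2 % 2 then j.val / 2 else (j.val + 1) / 2
  refine mem_closedNbhd_iff.mpr ⟨zigzag m hm k, mem_image_of_mem _ (mem_range.mpr ?_), ?_⟩
  · simp only [k]
    split_ifs <;> omega
  · simp only [zigzag, Nat.dist, k]
    split_ifs <;> omega

lemma exists_isDominating_card {m : ℕ} (hm : 1 ≤ m) :
    ∃ D : Finset (Fin 2 × Fin m), IsDominating 2 m D ∧ #D = m / 2 + 1 :=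
  ⟨_, isDominating_image_zigzag hm, by rw [card_image_of_injOn (zigzag_injOn hm), card_range]⟩

lemma domNumber_eq {n m k : ℕ} (hex : ∃ D, IsDominating n m D ∧ #D = k)
    (hle : ∀ D, IsDominating n m D → k ≤ #D) : domNumber n m = k :=
  le_antisymm (Nat.sInf_le hex) (le_csInf ⟨k, hex⟩ fun _ ⟨D, hD, hk⟩ => hk ▸ hle D hD)

theorem stmt_9 (m : ℕ) (hm : 2 ≤ m) : domNumber 2 m = (m + 2) / 2 := by
  have hm1 : 1 ≤ m := by omega
  rw [show (m + 2) / 2 = m / 2 + 1 by omega]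
  exact domNumber_eq (exists_isDominating_card hm1) fun _ hD => hD.half_add_one_le_card hm1
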